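/- Let C be a nonsymmetric topological operad with a basepoint {e_k}, and suppose C(k) is path-connected for some k ≥ 1. Then C(i) is path-connected for every i < k. -/

import Mathlib

open ContinuousMap unitInterval
universe u v

def sigmaIdx {k : ℕ} {m : Fin k → ℕ} (p : Σ i : Fin k, Fin (m i)) : Fin (∑ i, m i) :=
  ⟨(∑ i' ∈ Finset.univ.filter (fun i' => i' < p.1), m i') + p.2.1, by
    have hins := Finset.sum_le_sum_of_subset
      (f := m) (show insert p.1 (Finset.univ.filter (fun i' => i' < p.1)) ⊆ Finset.univ by simp)
    rw [Finset.sum_insert (by simp)] at hins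
    have := p.2.2
    omega⟩

structure OperadData (C : ℕ → Type u) where
  γ : ∀ {k : ℕ} {m : Fin k → ℕ} {s : ℕ}, (∑ i, m i) = s → C k → (∀ i, C (m i)) → C s
  one : C 1
  one_left : ∀ {k : ℕ} (h : (∑ _i : Fin 1, k) = k) (c : C k), γ h one (fun _ => c) = c
  one_right : ∀ {k : ℕ} (h : (∑ _i : Fin k, (1:ℕ)) = k) (c : C k), γ h c (fun _ => one) = c
  assoc : ∀ {k : ℕ} {m : Fin k → ℕ} {s : ℕ} (hs : (∑ i, m i) = s)
      {n : Fin s → ℕ} {t : ℕ} (ht : (∑ j, n j) = t)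
      {n' : Fin k → ℕ} (hn' : ∀ i, (∑ j : Fin (m i), n (Fin.cast hs (sigmaIdx ⟨i, j⟩))) = n' i)
      (h' : (∑ i, n' i) = t)
      (c : C k) (cs : ∀ i, C (m i)) (ds : ∀ j, C (n j)),
      γ ht (γ hs c cs) ds =
        γ h' c (fun i => γ (hn' i) (cs i) (fun j => ds (Fin.cast hs (sigmaIdx ⟨i, j⟩))))

structure PreTopOperad where
  C : ℕ → Type u
  topC : ∀ k, TopologicalSpace (C k)
  pt : C 0
  data : OperadData C

attribute [instance] PreTopOperad.topC

structure TopOperad extends PreTopOperad where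
  γ_cont : ∀ {k : ℕ} {m : Fin k → ℕ} {s : ℕ} (hs : (∑ i, m i) = s),
    Continuous fun p : C k × (∀ i, C (m i)) => data.γ hs p.1 p.2

lemma sum_ite_fin {k a b : ℕ} (i : Fin k) :
    (∑ j : Fin k, if j = i then a else b) = a + (k - 1) * b := by
  classical
  rw [Finset.sum_ite, Finset.sum_const, Finset.sum_const, Finset.filter_eq',
    if_pos (Finset.mem_univ i), Finset.filter_ne', Finset.card_singleton,
    Finset.card_erase_of_mem (Finset.mem_univ i)]
  simp [Finset.card_fin, Nat.mul_comm]

/-- The arguments `(1,…,1,*,1,…,1)` with `*` in position `i`. -/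
def TopOperad.delArgs (P : TopOperad) {k : ℕ} (i : Fin (k+1)) :
    ∀ j : Fin (k+1), P.C (if j = i then 0 else 1) := fun j =>
  if h : j = i then cast (congrArg P.C (by simp [h] : (if j = i then 0 else 1) = 0)).symm P.pt
  else cast (congrArg P.C (by simp [h] : (if j = i then 0 else 1) = 1)).symm P.data.one

/-- The face map `dᵢ(a) = γ(a; 1,…,1,*,1,…,1)`. -/
def TopOperad.face (P : TopOperad) {k : ℕ} (i : Fin (k+1)) (a : P.C (k+1)) : P.C k :=
  P.data.γ (m := fun j => if j = i then 0 else 1) (by rw [sum_ite_fin i]; omega) a (P.delArgs i)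

/-- The degeneracy map `sᵢ(a) = γ(a; 1,…,1,e₂,1,…,1)` (given an element `e₂ ∈ C(2)`). -/
def TopOperad.degen (P : TopOperad) (e2 : P.C 2) {k : ℕ} (i : Fin (k+1)) (a : P.C (k+1)) :
    P.C (k+2) :=
  P.data.γ (m := fun j => if j = i then 2 else 1) (by rw [sum_ite_fin i]; omega) a
    (fun j => if h : j = i then cast (congrArg P.C (by simp [h] : (if j = i then 2 else 1) = 2)).symm e2
      else cast (congrArg P.C (by simp [h] : (if j = i then 2 else 1) = 1)).symm P.data.one)

/-- An action of a topological operad on a space. -/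
structure OperadAction (P : TopOperad.{u}) (Y : Type v) [TopologicalSpace Y] where
  θ : ∀ {k : ℕ}, P.C k → (Fin k → Y) → Y
  θ_cont : ∀ {k : ℕ}, Continuous fun p : P.C k × (Fin k → Y) => θ p.1 p.2
  θ_one : ∀ y : Fin 1 → Y, θ P.data.one y = y 0
  θ_comp : ∀ {k : ℕ} {m : Fin k → ℕ} {s : ℕ} (hs : (∑ i, m i) = s)
      (c : P.C k) (cs : ∀ i, P.C (m i)) (y : Fin s → Y),
      θ (P.data.γ hs c cs) y = θ c fun i => θ (cs i) fun j => y (Fin.cast hs (sigmaIdx ⟨i, j⟩))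

variable {P : TopOperad.{u}} {Y : Type v} [TopologicalSpace Y]

/-- The basepoint `θ(*) ∈ Y` of a `𝒞`-space. -/
def OperadAction.basept (A : OperadAction P Y) : Y := A.θ P.pt Fin.elim0

/-- The `k`-ary product operation `θ_a : Y^k → Y`. -/
def OperadAction.mapk (A : OperadAction P Y) {k : ℕ} (a : P.C k) : C(Fin k → Y, Y) :=
  ⟨fun y => A.θ a y, A.θ_cont.comp (continuous_const.prodMk continuous_id)⟩

/-- The binary product operation `θ_a : Y × Y → Y`. -/
def OperadAction.map2 (A : OperadAction P Y) (a : P.C 2) : C(Y × Y, Y) :=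
  ⟨fun p => A.θ a ![p.1, p.2],
    A.θ_cont.comp (continuous_const.prodMk (continuous_pi fun i => by
      fin_cases i
      · exact continuous_fst
      · exact continuous_snd))⟩

/-- Dependent pairing over `Fin 2`. -/
def finPair {α : Fin 2 → Sort v} (b : α 0) (c : α 1) : ∀ i, α i
  | ⟨0, _⟩ => b
  | ⟨1, _⟩ => c

/-- Binary composition `γ(a; b, c)` in an operad. -/
def OperadData.γ₂ {C : ℕ → Type u} (D : OperadData C) {p q : ℕ}
    (a : C 2) (b : C p) (c : C q) : C (p + q) :=
  D.γ (m := ![p, q]) (by simp [Fin.sum_univ_two]) a (finPair b c)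

/-- A basepoint of a (nonsymmetric) topological operad: a sequence `e_k ∈ 𝒞(k)` with
`e₁ = 1`, `e₀ = *`, and `γ(e_k; e_{m₁},…,e_{m_k})` in the same path-component as `e_m`. -/
structure OperadBasepoint (P : TopOperad.{u}) where
  e : ∀ k, P.C k
  e_one : e 1 = P.data.one
  e_zero : e 0 = P.pt
  e_comp : ∀ {k : ℕ} {m : Fin k → ℕ} {s : ℕ} (hs : (∑ i, m i) = s),
    Joined (P.data.γ hs (e k) (fun i => e (m i))) (e s)

/-- Congruence for `γ` across a pointwise-equal decomposition function. -/
lemma gamma_congr {C : ℕ → Type u} (D : OperadData C) {k s : ℕ} {m₁ m₂ : Fin k → ℕ}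
    (hm : ∀ j, m₁ j = m₂ j) (h₁ : (∑ i, m₁ i) = s) (h₂ : (∑ i, m₂ i) = s)
    (c : C k) (cs₁ : ∀ i, C (m₁ i)) (cs₂ : ∀ i, C (m₂ i))
    (hcs : ∀ i, HEq (cs₁ i) (cs₂ i)) : D.γ h₁ c cs₁ = D.γ h₂ c cs₂ := by
  have hm' : m₁ = m₂ := funext hm
  subst hm'
  have hcs' : cs₁ = cs₂ := funext fun i => eq_of_heq (hcs i)
  subst hcs'
  rfl

lemma filter_lt_val_zero {k : ℕ} (z : Fin k) (hz : z.1 = 0) :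
    Finset.univ.filter (fun i' : Fin k => i' < z) = ∅ := by
  ext i'
  simp [Fin.lt_def, hz]

lemma filter_lt_val_one (z : Fin 2) (hz : z.1 = 1) :
    Finset.univ.filter (fun i' : Fin 2 => i' < z) = {(0 : Fin 2)} := by
  ext i'
  simp only [Finset.mem_filter, Finset.mem_univ, true_and, Finset.mem_singleton,
    Fin.lt_def, hz, Fin.ext_iff]
  omega

/-- Value of `sigmaIdx`. -/
lemma sigmaIdx_val {k : ℕ} {m : Fin k → ℕ} (p : Σ i : Fin k, Fin (m i)) :
    (sigmaIdx p).1 = (∑ i' ∈ Finset.univ.filter (fun i' => i' < p.1), m i') + p.2.1 := rfl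

/-- First computation: the face at the last position of `γ(c₂; a, 1)` is `γ(c₂; a, *)`. -/
lemma face_degen_eq (P : TopOperad.{u}) {i : ℕ} (c2 : P.C 2) (a : P.C i) :
    P.face (Fin.last i) (P.data.γ₂ c2 a P.data.one) =
      P.data.γ (m := ![i, 0]) (s := i) (by simp [Fin.sum_univ_two]) c2 (finPair a P.pt) := by
  unfold TopOperad.face OperadData.γ₂
  set hs : (∑ j, (![i, 1] : Fin 2 → ℕ) j) = i + 1 := by simp [Fin.sum_univ_two]
  have hval0 : ∀ (h2 : 0 < 2) (j : Fin ((![i, 1] : Fin 2 → ℕ) (⟨0, h2⟩ : Fin 2))),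
      (Fin.cast hs (sigmaIdx ⟨(⟨0, h2⟩ : Fin 2), j⟩)).1 = j.1 := by
    intro h2 j
    rw [Fin.coe_cast, sigmaIdx_val, filter_lt_val_zero _ rfl, Finset.sum_empty, Nat.zero_add]
  have hval1 : ∀ (h2 : 1 < 2) (j : Fin ((![i, 1] : Fin 2 → ℕ) (⟨1, h2⟩ : Fin 2))),
      (Fin.cast hs (sigmaIdx ⟨(⟨1, h2⟩ : Fin 2), j⟩)).1 = i := by
    intro h2 j
    rw [Fin.coe_cast, sigmaIdx_val, filter_lt_val_one _ rfl, Finset.sum_singleton]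
    show i + j.1 = i
    have hj : j.1 < 1 := j.2
    omega
  have hne : ∀ (h2 : 0 < 2) (j : Fin ((![i, 1] : Fin 2 → ℕ) (⟨0, h2⟩ : Fin 2))),
      Fin.cast hs (sigmaIdx ⟨(⟨0, h2⟩ : Fin 2), j⟩) ≠ Fin.last i := by
    intro h2 j hcontra
    have h3 := congrArg Fin.val hcontra
    rw [hval0 h2 j, Fin.val_last] at h3
    have hj : j.1 < i := j.2
    omega
  have heq1 : ∀ (h2 : 1 < 2) (j : Fin ((![i, 1] : Fin 2 → ℕ) (⟨1, h2⟩ : Fin 2))),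
      Fin.cast hs (sigmaIdx ⟨(⟨1, h2⟩ : Fin 2), j⟩) = Fin.last i := by
    intro h2 j
    apply Fin.ext
    rw [hval1 h2 j, Fin.val_last]
  have hn' : ∀ i2 : Fin 2,
      (∑ j : Fin ((![i, 1] : Fin 2 → ℕ) i2),
        (fun j' : Fin (i+1) => if j' = Fin.last i then 0 else 1)
          (Fin.cast hs (sigmaIdx ⟨i2, j⟩))) = (![i, 0] : Fin 2 → ℕ) i2 := by
    intro i2
    match i2 with
    | ⟨0, h2⟩ =>
      rw [Finset.sum_congr rfl (fun j _ => if_neg (hne h2 j))]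
      have : (![i, 1] : Fin 2 → ℕ) ⟨0, h2⟩ = i := rfl
      simp [this]
      exact Finset.card_fin _
    | ⟨1, h2⟩ =>
      rw [Finset.sum_congr rfl (fun j _ => if_pos (heq1 h2 j))]
      simp
  rw [P.data.assoc hs _ hn' (by simp [Fin.sum_univ_two]) c2 (finPair a P.data.one)
    (P.delArgs (Fin.last i))]
  congr 1
  funext i2
  match i2 with
  | ⟨0, h2⟩ =>
    show P.data.γ _ a _ = a
    refine Eq.trans (gamma_congr P.data (m₂ := fun _ : Fin i => 1) (fun j => by rw [if_neg (hne h2 j)])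
      _ (by simp) a _ (fun _ => P.data.one)
      (fun j => by
        show HEq (P.delArgs (Fin.last i) _) P.data.one
        rw [TopOperad.delArgs, dif_neg (hne h2 j)]
        exact cast_heq _ _)) ?_
    exact P.data.one_right _ a
  | ⟨1, h2⟩ =>
    show P.data.γ _ P.data.one _ = P.pt
    refine Eq.trans (gamma_congr P.data (m₂ := fun _ : Fin 1 => 0) (fun j => by rw [if_pos (heq1 h2 j)])
      _ (by simp) P.data.one _ (fun _ => P.pt)
      (fun j => by
        show HEq (P.delArgs (Fin.last i) _) P.pt
        rw [TopOperad.delArgs, dif_pos (heq1 h2 j)]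
        exact cast_heq _ _)) ?_
    exact P.data.one_left _ P.pt

/-- Second computation: `γ(c₂; a, *) = γ(γ(c₂; 1, *); a)`. -/
lemma gamma2_pt_eq (P : TopOperad.{u}) {i : ℕ} (c2 : P.C 2) (a : P.C i) :
    P.data.γ (m := ![i, 0]) (s := i) (by simp [Fin.sum_univ_two]) c2 (finPair a P.pt) =
      P.data.γ (m := fun _ : Fin 1 => i) (s := i) (by simp)
        (P.data.γ (m := ![1, 0]) (s := 1) (by simp [Fin.sum_univ_two]) c2
          (finPair P.data.one P.pt))
        (fun _ => a) := by
  set hs : (∑ j, (![1, 0] : Fin 2 → ℕ) j) = 1 := by simp [Fin.sum_univ_two]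
  have hn' : ∀ i2 : Fin 2,
      (∑ j : Fin ((![1, 0] : Fin 2 → ℕ) i2),
        (fun _ : Fin 1 => i) (Fin.cast hs (sigmaIdx ⟨i2, j⟩))) = (![i, 0] : Fin 2 → ℕ) i2 := by
    intro i2
    match i2 with
    | ⟨0, h2⟩ => simp; exact (congrArg (· * i) (Finset.card_fin 1)).trans (one_mul i)
    | ⟨1, h2⟩ => simp; exact Or.inl (Finset.univ_eq_empty (α := Fin 0))
  rw [P.data.assoc hs (by simp : (∑ _j : Fin 1, i) = i) hn' (by simp [Fin.sum_univ_two]) c2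
    (finPair P.data.one P.pt) (fun _ => a)]
  congr 1
  funext i2
  match i2 with
  | ⟨0, h2⟩ =>
    show a = P.data.γ _ P.data.one _
    exact (P.data.one_left _ a).symm
  | ⟨1, h2⟩ =>
    show P.pt = P.data.γ _ P.pt _
    refine Eq.trans ?_ (gamma_congr P.data (m₂ := fun _ : Fin 0 => 1) (fun j => j.elim0)
      _ (by simp) P.pt _ (fun _ => P.data.one) (fun j => j.elim0)).symm
    exact (P.data.one_right _ P.pt).symm

lemma joined_map {X : Type u} {Z : Type v} [TopologicalSpace X] [TopologicalSpace Z]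
    {x y : X} (h : Joined x y) {f : X → Z} (hf : Continuous f) : Joined (f x) (f y) :=
  ⟨h.somePath.map hf⟩

/-- The key joining: `dᵢ(sᵢ(a))` is joined to `a`. -/
lemma face_degen_joined (P : TopOperad.{u}) (B : OperadBasepoint P) {i : ℕ} (a : P.C i) :
    Joined (P.face (Fin.last i) (P.data.γ₂ (B.e 2) a P.data.one)) a := by
  rw [face_degen_eq, gamma2_pt_eq]
  have hc : Joined (P.data.γ (m := ![1, 0]) (by simp [Fin.sum_univ_two]) (B.e 2)
      (finPair P.data.one P.pt)) P.data.one := by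
    have hcomp := B.e_comp (m := ![1, 0]) (by simp [Fin.sum_univ_two] : (∑ j, (![1,0] : Fin 2 → ℕ) j) = 1)
    rw [B.e_one] at hcomp
    have harg : (fun j => B.e ((![1, 0] : Fin 2 → ℕ) j)) = finPair P.data.one P.pt := by
      funext j
      match j with
      | ⟨0, h2⟩ => show B.e 1 = P.data.one; exact B.e_one
      | ⟨1, h2⟩ => show B.e 0 = P.pt; exact B.e_zero
    rwa [harg] at hcomp
  have hcont : Continuous (fun x : P.C 1 =>
      P.data.γ (m := fun _ : Fin 1 => i) (s := i) (by simp) x (fun _ => a)) :=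
    (P.γ_cont (s := i) (by simp)).comp (continuous_id.prodMk continuous_const)
  have hm := joined_map hc hcont
  rw [P.data.one_left (by simp) a] at hm
  exact hm

lemma face_continuous (P : TopOperad.{u}) {k : ℕ} (i : Fin (k+1)) :
    Continuous (P.face i) := by
  unfold TopOperad.face
  exact (P.γ_cont _).comp (continuous_id.prodMk continuous_const)

/-- One step down: path-connectedness of `𝒞(i+1)` implies that of `𝒞(i)`. -/
lemma step_down (P : TopOperad.{u}) (B : OperadBasepoint P) {i : ℕ}
    (h : PathConnectedSpace (P.C (i+1))) : PathConnectedSpace (P.C i) := by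
  refine ⟨⟨B.e i⟩, fun a b => ?_⟩
  have h1 := face_degen_joined P B a
  have h2 := face_degen_joined P B b
  have h3 : Joined (P.data.γ₂ (B.e 2) a P.data.one) (P.data.γ₂ (B.e 2) b P.data.one) :=
    h.joined _ _
  exact h1.symm.trans ((joined_map h3 (face_continuous P (Fin.last i))).trans h2)

lemma down_induction (P : TopOperad.{u}) (B : OperadBasepoint P) :
    ∀ (n i : ℕ), PathConnectedSpace (P.C (i + n)) → PathConnectedSpace (P.C i) := by
  intro n
  induction n with
  | zero => intro i h; exact h
  | succ n ih =>
    intro i h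
    exact ih i (step_down P B (by rw [show i + n + 1 = i + (n+1) by omega]; exact h))

/-- If a nonsymmetric topological operad `𝒞` with a basepoint has `𝒞(k)`
path-connected for some `k ≥ 1`, then `𝒞(i)` is path-connected for every `i < k`. -/
theorem pathConnected_below_of_pathConnected (P : TopOperad.{u}) (B : OperadBasepoint P)
    (k : ℕ) (hk : 1 ≤ k) (h : PathConnectedSpace (P.C k)) :
    ∀ i < k, PathConnectedSpace (P.C i) := by
  intro i hi
  have : i + (k - i) = k := by omega
  exact down_induction P B (k - i) i (by rw [this]; exact h)
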